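/- arXiv:1702.03452 — 4 statements merged into one kernel-verified Lean document; each statement's English description precedes it below -/
import Mathlib

section
/- If V : ℝ^m → ℝ^m is a smooth (C^∞) vector field whose Fréchet derivative (DV)(x) is a skew-symmetric linear map for every x ∈ ℝ^m (i.e., ⟨(DV)(x)u, w⟩ + ⟨u, (DV)(x)w⟩ = 0 for all u, w, with respect to the standard inner product), then V is a Killing field: there exist a skew-symmetric m×m matrix A and a vector b ∈ ℝ^m such that V(x) = A·x + b for all x. -/
open Matrix

/-- Dot product with a fixed vector `c` on the left, as a continuous linear map. -/
noncomputable def dotCLM {m : ℕ} (c : Fin m → ℝ) : (Fin m → ℝ) →L[ℝ] ℝ :=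
  ∑ i, c i • ContinuousLinearMap.proj i

theorem dotCLM_apply {m : ℕ} (c z : Fin m → ℝ) : dotCLM c z = c ⬝ᵥ z := by
  simp [dotCLM, dotProduct, ContinuousLinearMap.sum_apply]

/-- If `V : ℝ^m → ℝ^m` is a smooth vector field whose Fréchet derivative `(DV)(x)` is
skew-symmetric with respect to the standard inner product at every point `x`, then `V` is a
Killing field: `V(x) = A·x + b` for a skew-symmetric matrix `A` and a vector `b`. -/
theorem killing_of_skew_derivative {m : ℕ} (hm : 1 ≤ m)
    (V : (Fin m → ℝ) → (Fin m → ℝ)) (hV : ContDiff ℝ (⊤ : ℕ∞) V)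
    (hskew : ∀ x u w : Fin m → ℝ,
      (fderiv ℝ V x u) ⬝ᵥ w + u ⬝ᵥ (fderiv ℝ V x w) = 0) :
    ∃ (A : Matrix (Fin m) (Fin m) ℝ) (b : Fin m → ℝ),
      Aᵀ = -A ∧ ∀ x, V x = A.mulVec x + b := by
  set f := fderiv ℝ V with hf
  have hVdiff : Differentiable ℝ V := hV.differentiable (by simp)
  have hfC : ContDiff ℝ (⊤ : ℕ∞) f := hV.fderiv_right (by simp)
  have hfdiff : Differentiable ℝ f := hfC.differentiable (by simp)
  -- The second derivative vanishes everywhere.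
  have hB : ∀ x, fderiv ℝ f x = 0 := by
    intro x
    set B := fderiv ℝ f x with hBdef
    have hsym : ∀ u v, B u v = B v u :=
      second_derivative_symmetric (fun y => (hVdiff y).hasFDerivAt) (hfdiff x).hasFDerivAt
    have key : ∀ v u w : Fin m → ℝ, (B v u) ⬝ᵥ w + u ⬝ᵥ (B v w) = 0 := by
      intro v u w
      set G₁ : ((Fin m → ℝ) →L[ℝ] (Fin m → ℝ)) →L[ℝ] ℝ :=
        (dotCLM w).comp (ContinuousLinearMap.apply ℝ (Fin m → ℝ) u) with hG₁
      set G₂ : ((Fin m → ℝ) →L[ℝ] (Fin m → ℝ)) →L[ℝ] ℝ :=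
        (dotCLM u).comp (ContinuousLinearMap.apply ℝ (Fin m → ℝ) w) with hG₂
      have hD : HasFDerivAt (fun y => G₁ (f y) + G₂ (f y))
          ((G₁.comp B) + (G₂.comp B)) x :=
        ((G₁.hasFDerivAt.comp x (hfdiff x).hasFDerivAt).add
          (G₂.hasFDerivAt.comp x (hfdiff x).hasFDerivAt))
      have h0fun : (fun y => G₁ (f y) + G₂ (f y)) = fun _ => (0 : ℝ) := by
        funext y
        have := hskew y u w
        simp only [hG₁, hG₂, ContinuousLinearMap.comp_apply,
          ContinuousLinearMap.apply_apply, dotCLM_apply]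
        rw [dotProduct_comm w (f y u)]
        exact this
      have hD0 : HasFDerivAt (fun y => G₁ (f y) + G₂ (f y)) (0 : (Fin m → ℝ) →L[ℝ] ℝ) x := by
        have h := hasFDerivAt_const (𝕜 := ℝ) (E := Fin m → ℝ) (0:ℝ) x
        rw [h0fun]
        exact h
      have := hD.unique hD0
      have hv := congrArg (fun (T : (Fin m → ℝ) →L[ℝ] ℝ) => T v) this
      simp only [hG₁, hG₂, ContinuousLinearMap.add_apply, ContinuousLinearMap.comp_apply,
        ContinuousLinearMap.apply_apply, dotCLM_apply, ContinuousLinearMap.zero_apply] at hv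
      rw [dotProduct_comm w (B v u)] at hv
      exact hv
    have anti : ∀ a b c : Fin m → ℝ, (B a b) ⬝ᵥ c = -((B a c) ⬝ᵥ b) := by
      intro a b c
      have := key a b c
      rw [dotProduct_comm b (B a c)] at this
      linarith
    have symd : ∀ a b c : Fin m → ℝ, (B a b) ⬝ᵥ c = (B b a) ⬝ᵥ c := by
      intro a b c; rw [hsym a b]
    have zero : ∀ a b c : Fin m → ℝ, (B a b) ⬝ᵥ c = 0 := by
      intro u v w
      have h1 : (B u v) ⬝ᵥ w = -((B u w) ⬝ᵥ v) := anti u v w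
      have h2 : (B u w) ⬝ᵥ v = (B w u) ⬝ᵥ v := symd u w v
      have h3 : (B w u) ⬝ᵥ v = -((B w v) ⬝ᵥ u) := anti w u v
      have h4 : (B w v) ⬝ᵥ u = (B v w) ⬝ᵥ u := symd w v u
      have h5 : (B v w) ⬝ᵥ u = -((B v u) ⬝ᵥ w) := anti v w u
      have h6 : (B v u) ⬝ᵥ w = (B u v) ⬝ᵥ w := symd v u w
      linarith
    ext u v : 2
    have h := dotProduct_self_eq_zero.mp (zero u v (B u v))
    simpa using h
  -- Hence `f` is constant, equal to `L := f 0`.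
  set L := f 0 with hL
  have hconst : ∀ x, f x = L := fun x => is_const_of_fderiv_eq_zero hfdiff hB x 0
  -- So `V x = L x + V 0`.
  have haff : ∀ x, V x = L x + V 0 := by
    have hg : ∀ y, HasFDerivAt (fun z => V z - L z) (0 : (Fin m → ℝ) →L[ℝ] (Fin m → ℝ)) y := by
      intro y
      have h1 : HasFDerivAt V L y := by
        have := (hVdiff y).hasFDerivAt
        rwa [show fderiv ℝ V y = L from hconst y] at this
      have h2 : HasFDerivAt (fun z => L z) L y := L.hasFDerivAt
      simpa using h1.sub h2
    have hgd : Differentiable ℝ (fun z => V z - L z) := fun y => (hg y).differentiableAt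
    have hgz : ∀ y, fderiv ℝ (fun z => V z - L z) y = 0 := fun y => (hg y).fderiv
    intro x
    have := is_const_of_fderiv_eq_zero hgd hgz x 0
    simp only [map_zero, sub_zero] at this
    have : V x - L x = V 0 := this
    rw [← this]; ring_nf
  refine ⟨LinearMap.toMatrix' (L : (Fin m → ℝ) →ₗ[ℝ] (Fin m → ℝ)), V 0, ?_, ?_⟩
  · ext i j
    have hs := hskew 0 (Pi.single j 1) (Pi.single i 1)
    rw [← hL] at hs
    rw [dotProduct_single, single_dotProduct, mul_one, one_mul] at hs
    simp only [transpose_apply, neg_apply, LinearMap.toMatrix'_apply]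
    have e1 : (fun j' => if j' = i then (1:ℝ) else 0) = Pi.single i 1 := by
      funext j'; simp [Pi.single_apply]
    have e2 : (fun j' => if j' = j then (1:ℝ) else 0) = Pi.single j 1 := by
      funext j'; simp [Pi.single_apply]
    show _ = -(LinearMap.toMatrix' (L : (Fin m → ℝ) →ₗ[ℝ] (Fin m → ℝ)) i j)
    rw [LinearMap.toMatrix'_apply]
    simp only [ContinuousLinearMap.coe_coe]
    linarith
  · intro x
    rw [haff x]
    congr 1
    have : Matrix.toLin' (LinearMap.toMatrix' (L : (Fin m → ℝ) →ₗ[ℝ] (Fin m → ℝ))) =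
        (L : (Fin m → ℝ) →ₗ[ℝ] (Fin m → ℝ)) := Matrix.toLin'_toMatrix' _
    have := congrFun (congrArg DFunLike.coe this) x
    rw [Matrix.toLin'_apply] at this
    rw [this]; rfl
end

section
/- Let m ≥ 2 and let 𝔤 be the Killing algebra of ℝ^m with bracket ⁅(A,a),(B,b)⁆ = (B·A − A·B, B·a − A·b), and let rad 𝔤 = {(0,b) : b ∈ ℝ^m} be the ideal of constant Killing fields. If 𝔥 ⊆ 𝔤 is a Lie subalgebra which is a vector-space complement of rad 𝔤 (i.e., 𝔥 ∩ rad 𝔤 = 0 and 𝔥 + rad 𝔤 = 𝔤), then there exists a unique point m₀ ∈ ℝ^m such that 𝔥 = 𝔤_{m₀} := {(A, −A·m₀) : A skew-symmetric}, the subalgebra of Killing fields vanishing at m₀. -/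
open Matrix

/-- The Killing algebra of `ℝ^m`: pairs `(A, b)` with `A` skew-symmetric. -/
def killingAlg (m : ℕ) : Submodule ℝ (Matrix (Fin m) (Fin m) ℝ × (Fin m → ℝ)) where
  carrier := {p | p.1ᵀ = -p.1}
  add_mem' := by
    intro p q hp hq
    simp only [Set.mem_setOf_eq] at *
    simp [Matrix.transpose_add, hp, hq]; abel
  zero_mem' := by simp
  smul_mem' := by
    intro c p hp
    simp only [Set.mem_setOf_eq] at *
    simp [Matrix.transpose_smul, hp]

/-- The Lie bracket `⁅(A,a),(B,b)⁆ = (B·A − A·B, B·a − A·b)` of the Killing algebra. -/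
def killingBracket {m : ℕ} (p q : Matrix (Fin m) (Fin m) ℝ × (Fin m → ℝ)) :
    Matrix (Fin m) (Fin m) ℝ × (Fin m → ℝ) :=
  (q.1 * p.1 - p.1 * q.1, q.1.mulVec p.2 - p.1.mulVec q.2)

/-- The subspace `rad 𝔤 = {(0, b) : b ∈ ℝ^m}` of constant Killing fields. -/
def killingRad (m : ℕ) : Submodule ℝ (Matrix (Fin m) (Fin m) ℝ × (Fin m → ℝ)) where
  carrier := {p | p.1 = 0}
  add_mem' := by
    intro p q hp hq
    simp only [Set.mem_setOf_eq] at *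
    simp [hp, hq]
  zero_mem' := by simp
  smul_mem' := by
    intro c p hp
    simp only [Set.mem_setOf_eq] at *
    simp [hp]

/-- The subalgebra `𝔤_{m₀} = {(A, −A·m₀) : A skew}` of Killing fields vanishing at `m₀`. -/
def killingIsotropy (m : ℕ) (m₀ : Fin m → ℝ) :
    Submodule ℝ (Matrix (Fin m) (Fin m) ℝ × (Fin m → ℝ)) where
  carrier := {p | p.1ᵀ = -p.1 ∧ p.2 = -(p.1.mulVec m₀)}
  add_mem' := by
    rintro p q ⟨hp1, hp2⟩ ⟨hq1, hq2⟩
    refine ⟨by simp [Matrix.transpose_add, hp1, hq1]; abel, ?_⟩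
    simp [Matrix.add_mulVec, hp2, hq2]; abel
  zero_mem' := by simp
  smul_mem' := by
    rintro c p ⟨hp1, hp2⟩
    exact ⟨by simp [Matrix.transpose_smul, hp1],
      by simp [Matrix.smul_mulVec, hp2]⟩

/-!
Since `𝔥` is a complement of `rad 𝔤`, it is the graph `{(A, φ A)}` of a linear map `φ` on
`𝔰𝔬(m)`, and closure under the bracket makes `φ` a 1-cocycle with values in `ℝ^m`. As in the proof
of Whitehead's first lemma, contracting the cocycle identity with the `ad`-invariant Casimir tensor
`∑ Cᵢⱼ ⊗ Cᵢⱼ`, where `Cᵢⱼ = Eᵢⱼ - Eⱼᵢ`, whose square `∑ Cᵢⱼ²` is `(2 - 2m) • 1`, shows that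
`φ A = -A v` for `v = ∑ Cᵢⱼ φ(Cᵢⱼ) / (2m - 2)`. Uniqueness holds because `(Cᵢⱼ v)ᵢ = vⱼ`.
-/

open Finset

namespace Matrix

section Skew

variable {n R M : Type*} [Fintype n] [CommRing R] [AddCommGroup M] [Module R M]

theorem sum_sum_smul_add_swap_eq_zero {B : Matrix n n R} (hB : Bᵀ = -B) (g : n → n → M) :
    ∑ i, ∑ k, B i k • (g i k + g k i) = 0 := by
  have hswap (i k : n) : B k i • g i k = -(B i k • g i k) := by
    rw [← neg_smul]
    congr
    simpa using congr_fun₂ hB i k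
  simp only [smul_add, sum_add_distrib]
  rw [sum_comm (f := fun i k => B i k • g k i)]
  simp only [hswap, sum_neg_distrib, add_neg_cancel]

variable [DecidableEq n]

def skewSingle (i j : n) : Matrix n n R :=
  single i j 1 - single j i 1

omit [Fintype n] in
theorem transpose_skewSingle (i j : n) : (skewSingle i j : Matrix n n R)ᵀ = -skewSingle i j := by
  simp [skewSingle]

theorem skewSingle_mulVec (i j : n) (v : n → R) :
    skewSingle i j *ᵥ v = Pi.single i (v j) - Pi.single j (v i) := by
  ext a
  simp [skewSingle, sub_mulVec, single_mulVec, Function.update_apply, Pi.single_apply]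

theorem sum_smul_skewSingle (A : Matrix n n R) :
    ∑ i, ∑ j, A i j • skewSingle i j = A - Aᵀ := by
  simp only [skewSingle, smul_sub, sum_sub_distrib, smul_single, smul_eq_mul, mul_one]
  rw [← matrix_eq_sum_single, sum_comm, matrix_eq_sum_single Aᵀ]
  rfl

theorem single_one_mul_single_one (i j k l : n) :
    (single i j 1 * single k l 1 : Matrix n n R) = if j = k then single i l 1 else 0 := by
  split_ifs with h
  · subst h
    simp
  · exact single_mul_single_of_ne (c := 1) _ _ _ h _

theorem sum_skewSingle_mul_self :
    ∑ i : n, ∑ j : n, skewSingle i j * skewSingle i j =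
      ((2 : R) - 2 * Fintype.card n) • (1 : Matrix n n R) := by
  simp only [skewSingle, sub_mul, mul_sub, single_one_mul_single_one, sum_sub_distrib, sum_ite_eq,
    sum_ite_eq', mem_univ, if_true, sum_const, card_univ, sum_single_one]
  simp only [← smul_sum, sum_single_one]
  module

theorem commutator_skewSingle {B : Matrix n n R} (hB : Bᵀ = -B) (i j : n) :
    B * skewSingle i j - skewSingle i j * B =
      ∑ k, (B k i • skewSingle k j + B k j • skewSingle i k) := by
  have hB' (a b : n) : B b a = -B a b := by simpa using congr_fun₂ hB a b
  ext a b
  simp only [skewSingle, single, ite_and, of_sub_of, sub_apply, mul_apply, hB' _ a, of_apply,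
    Pi.sub_apply, mul_sub, mul_ite, mul_one, mul_zero, sum_sub_distrib, sum_ite_eq, mem_univ,
    ↓reduceIte, sub_mul, ite_mul, one_mul, zero_mul, sum_ite_irrel, sum_const_zero, smul_of,
    of_add_of, sum_apply, Pi.add_apply, Pi.smul_apply, smul_eq_mul, sum_add_distrib, sum_ite_eq']
  rw [hB' b i, hB' b j]
  split_ifs <;> ring

/-- Invariance of the Casimir tensor `∑ Cᵢⱼ ⊗ Cᵢⱼ` under `ad B`, tested against a bilinear map. -/
theorem sum_bilin_commutator_skewSingle {B : Matrix n n R} (hB : Bᵀ = -B)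
    (β : Matrix n n R →ₗ[R] Matrix n n R →ₗ[R] M) :
    ∑ i, ∑ j, (β (B * skewSingle i j - skewSingle i j * B) (skewSingle i j) +
      β (skewSingle i j) (B * skewSingle i j - skewSingle i j * B)) = 0 := by
  calc _ = ∑ i, ∑ j, ∑ k, B k i • (β (skewSingle k j) (skewSingle i j) +
          β (skewSingle i j) (skewSingle k j)) +
        ∑ i, ∑ j, ∑ k, B k j • (β (skewSingle i k) (skewSingle i j) +
          β (skewSingle i j) (skewSingle i k)) := by
        simp only [commutator_skewSingle hB, map_sum, map_add, map_smul, LinearMap.sum_apply,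
          LinearMap.add_apply, LinearMap.smul_apply, smul_add, sum_add_distrib]
        abel
    _ = ∑ j, ∑ k, ∑ i, B k i • (β (skewSingle k j) (skewSingle i j) +
          β (skewSingle i j) (skewSingle k j)) +
        ∑ i, ∑ k, ∑ j, B k j • (β (skewSingle i k) (skewSingle i j) +
          β (skewSingle i j) (skewSingle i k)) := by
        rw [sum_comm]
        congr 1 <;> exact sum_congr rfl fun _ _ => sum_comm
    _ = 0 := by simp only [sum_sum_smul_add_swap_eq_zero hB, sum_const_zero, add_zero]

end Skew

theorem exists_eq_neg_mulVec_of_cocycle {n K : Type*} [Fintype n] [DecidableEq n] [Field K]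
    [CharZero K] (hn : 2 ≤ Fintype.card n) (φ : Matrix n n K →ₗ[K] n → K)
    (hφ : ∀ A B : Matrix n n K, Aᵀ = -A → Bᵀ = -B → φ (B * A - A * B) = B *ᵥ φ A - A *ᵥ φ B) :
    ∃ v, ∀ B : Matrix n n K, Bᵀ = -B → φ B = -(B *ᵥ v) := by
  set c : K := 2 - 2 * Fintype.card n
  have hc : c ≠ 0 := by
    simp only [c]
    exact_mod_cast (show (2 - 2 * Fintype.card n : ℤ) ≠ 0 by omega)
  set S := ∑ i, ∑ j, skewSingle i j *ᵥ φ (skewSingle i j)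
  refine ⟨-c⁻¹ • S, fun B hB => ?_⟩
  have hcasimir :=
    sum_bilin_commutator_skewSingle hB ((toLin' : Matrix n n K ≃ₗ[K] _).toLinearMap.compl₂ φ)
  simp only [LinearMap.compl₂_apply, LinearEquiv.coe_coe, toLin'_apply] at hcasimir
  have hBS : B *ᵥ S = c • φ B := by
    calc B *ᵥ S = ∑ i, ∑ j, ((B * skewSingle i j - skewSingle i j * B) *ᵥ φ (skewSingle i j) +
          skewSingle i j *ᵥ (B *ᵥ φ (skewSingle i j))) := by
          simp only [S, mulVec_sum, mulVec_mulVec, ← add_mulVec, sub_add_cancel]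
      _ = ∑ i, ∑ j, ((B * skewSingle i j - skewSingle i j * B) *ᵥ φ (skewSingle i j) +
            skewSingle i j *ᵥ φ (B * skewSingle i j - skewSingle i j * B)) +
          (∑ i, ∑ j, skewSingle i j * skewSingle i j) *ᵥ φ B := by
          simp only [hφ _ _ (transpose_skewSingle _ _) hB, sum_mulVec, mulVec_sub, mulVec_mulVec,
            ← sum_add_distrib]
          congr! 2 with i _ j _
          abel
      _ = c • φ B := by
          rw [hcasimir, sum_skewSingle_mul_self, smul_mulVec, one_mulVec, zero_add]
  rw [mulVec_smul, hBS, smul_smul, neg_mul, inv_mul_cancel₀ hc, neg_smul, one_smul, neg_neg]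

end Matrix

section Killing

variable {m : ℕ} {h : Submodule ℝ (Matrix (Fin m) (Fin m) ℝ × (Fin m → ℝ))}

theorem eq_of_mk_mem_of_inf_killingRad_eq_bot (hinf : h ⊓ killingRad m = ⊥)
    {A : Matrix (Fin m) (Fin m) ℝ} {x y : Fin m → ℝ} (hx : (A, x) ∈ h) (hy : (A, y) ∈ h) :
    x = y := by
  have hmem : (A, x) - (A, y) ∈ h ⊓ killingRad m :=
    ⟨h.sub_mem hx hy, show A - A = 0 from sub_self A⟩
  rw [hinf, Submodule.mem_bot, Prod.mk_sub_mk] at hmem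
  exact sub_eq_zero.mp (congrArg Prod.snd hmem)

theorem exists_mk_mem_of_sup_killingRad_eq (hsup : h ⊔ killingRad m = killingAlg m)
    {A : Matrix (Fin m) (Fin m) ℝ} (hA : Aᵀ = -A) : ∃ b, (A, b) ∈ h := by
  have hA' : (A, (0 : Fin m → ℝ)) ∈ h ⊔ killingRad m := hsup ▸ hA
  obtain ⟨p, hp, q, hq, hpq⟩ := Submodule.mem_sup.mp hA'
  have hq' : q.1 = 0 := hq
  refine ⟨p.2, ?_⟩
  have hp' : p.1 = A := by simpa [hq'] using congrArg Prod.fst hpq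
  rwa [← hp']

theorem exists_linearMap_mk_mem_of_sup_killingRad_eq (hsup : h ⊔ killingRad m = killingAlg m) :
    ∃ φ : Matrix (Fin m) (Fin m) ℝ →ₗ[ℝ] Fin m → ℝ, ∀ A, Aᵀ = -A → (A, φ A) ∈ h := by
  choose ψ hψ using fun i j => exists_mk_mem_of_sup_killingRad_eq hsup (transpose_skewSingle i j)
  let φ : Matrix (Fin m) (Fin m) ℝ →ₗ[ℝ] Fin m → ℝ :=
    (2⁻¹ : ℝ) • ∑ i, ∑ j, (entryLinearMap ℝ ℝ i j).smulRight (ψ i j)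
  refine ⟨φ, fun A hA => ?_⟩
  have hA' : (A, φ A) = (2⁻¹ : ℝ) • ∑ i, ∑ j, A i j • (skewSingle i j, ψ i j) := by
    ext : 1
    · simp only [Prod.smul_fst, Prod.fst_sum, Prod.smul_mk, sum_smul_skewSingle, hA]
      module
    · simp [φ, Prod.snd_sum]
  rw [hA']
  exact h.smul_mem _ (h.sum_mem fun i _ => h.sum_mem fun j _ => h.smul_mem _ (hψ i j))

theorem map_commutator_of_mk_mem (hclosed : ∀ p ∈ h, ∀ q ∈ h, killingBracket p q ∈ h)
    (hinf : h ⊓ killingRad m = ⊥) {φ : Matrix (Fin m) (Fin m) ℝ →ₗ[ℝ] Fin m → ℝ}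
    (hφ : ∀ A, Aᵀ = -A → (A, φ A) ∈ h) (A B : Matrix (Fin m) (Fin m) ℝ)
    (hA : Aᵀ = -A) (hB : Bᵀ = -B) : φ (B * A - A * B) = B *ᵥ φ A - A *ᵥ φ B :=
  eq_of_mk_mem_of_inf_killingRad_eq_bot hinf (hφ _ (by simp [hA, hB]))
    (hclosed _ (hφ A hA) _ (hφ B hB))

theorem eq_killingIsotropy_of_le (hsup : h ⊔ killingRad m = killingAlg m) {v : Fin m → ℝ}
    (hle : h ≤ killingIsotropy m v) : h = killingIsotropy m v := by
  have hiso : killingIsotropy m v ≤ killingAlg m := fun _ hp => hp.1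
  have hrad : killingRad m ⊓ killingIsotropy m v = ⊥ := by
    refine (Submodule.eq_bot_iff _).mpr fun p ⟨hp₁, _, hp₂⟩ => ?_
    have hp₁' : p.1 = 0 := hp₁
    simpa [hp₁'] using Prod.ext hp₁' (hp₂.trans (by simp [hp₁']))
  calc h = h ⊔ killingRad m ⊓ killingIsotropy m v := by rw [hrad, sup_bot_eq]
    _ = (h ⊔ killingRad m) ⊓ killingIsotropy m v := (sup_inf_assoc_of_le _ hle).symm
    _ = killingIsotropy m v := by rw [hsup, inf_eq_right.mpr hiso]

theorem killingIsotropy_injective (hm : 2 ≤ m) : Function.Injective (killingIsotropy m) := by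
  intro v w hvw
  funext j
  have : Nontrivial (Fin m) := Fin.nontrivial_iff_two_le.mpr hm
  obtain ⟨i, hij⟩ := exists_ne j
  have hmem : (skewSingle i j, -(skewSingle i j *ᵥ v)) ∈ killingIsotropy m w :=
    hvw ▸ ⟨transpose_skewSingle i j, rfl⟩
  simpa [skewSingle_mulVec, hij] using congr_fun (neg_injective hmem.2) i

end Killing

/-- If a Lie subalgebra `𝔥` of the Killing algebra `𝔤` of `ℝ^m` (`m ≥ 2`) is a vector-space
complement of the ideal `rad 𝔤` of constant Killing fields, then `𝔥` is the isotropy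
subalgebra `𝔤_{m₀}` of Killing fields vanishing at a unique point `m₀ ∈ ℝ^m`. -/
theorem complement_of_rad_is_isotropy (m : ℕ) (hm : 2 ≤ m)
    (h : Submodule ℝ (Matrix (Fin m) (Fin m) ℝ × (Fin m → ℝ)))
    (hsub : h ≤ killingAlg m)
    (hclosed : ∀ p ∈ h, ∀ q ∈ h, killingBracket p q ∈ h)
    (hinf : h ⊓ killingRad m = ⊥)
    (hsup : h ⊔ killingRad m = killingAlg m) :
    ∃! m₀ : Fin m → ℝ, h = killingIsotropy m m₀ := by
  obtain ⟨φ, hφ⟩ := exists_linearMap_mk_mem_of_sup_killingRad_eq hsup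
  obtain ⟨v, hv⟩ := exists_eq_neg_mulVec_of_cocycle (by simpa using hm) φ
    (map_commutator_of_mk_mem hclosed hinf hφ)
  have hle : h ≤ killingIsotropy m v := fun p hp =>
    have hskew : p.1ᵀ = -p.1 := hsub hp
    ⟨hskew, (eq_of_mk_mem_of_inf_killingRad_eq_bot hinf hp (hφ _ hskew)).trans (hv _ hskew)⟩
  have heq := eq_killingIsotropy_of_le hsup hle
  exact ⟨v, heq, fun w hw => killingIsotropy_injective hm (hw.symm.trans heq)⟩
end

section
/- With 𝔤, ρ, ♯ and the action-algebroid bracket as in the context: the action-algebroid bracket satisfies the Jacobi identity, i.e., for all smooth maps X, Y, Z : E → 𝔤, [X,[Y,Z]] + [Y,[Z,X]] + [Z,[X,Y]] = 0 as maps E → 𝔤. -/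
set_option linter.unusedSectionVars false
set_option maxHeartbeats 1000000


/-- The anchor of a `𝔤`-valued map under an action `ρ` of `𝔤` on `E`:
`♯X(x) = ρ(X(x))(x)`. -/
def anchorMap {E g : Type*} [NormedAddCommGroup E] [NormedSpace ℝ E]
    [NormedAddCommGroup g] [NormedSpace ℝ g]
    (ρ : g →ₗ[ℝ] E → E) (X : E → g) : E → E :=
  fun x => ρ (X x) x

/-- The action-algebroid bracket of smooth `𝔤`-valued maps:
`[X,Y](x) = (DY)(x)(♯X(x)) − (DX)(x)(♯Y(x)) + ⁅X(x), Y(x)⁆`. -/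
noncomputable def actionBracket {E g : Type*} [NormedAddCommGroup E] [NormedSpace ℝ E]
    [NormedAddCommGroup g] [NormedSpace ℝ g]
    (br : g →ₗ[ℝ] g →ₗ[ℝ] g) (ρ : g →ₗ[ℝ] E → E) (X Y : E → g) : E → g :=
  fun x => fderiv ℝ Y x (anchorMap ρ X x) - fderiv ℝ X x (anchorMap ρ Y x) + br (X x) (Y x)

section helpers

variable {E g : Type*} [NormedAddCommGroup E] [NormedSpace ℝ E] [FiniteDimensional ℝ E]
  [NormedAddCommGroup g] [NormedSpace ℝ g] [FiniteDimensional ℝ g]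

noncomputable def rhoAt (ρ : g →ₗ[ℝ] E → E) (x : E) : g →L[ℝ] E :=
  LinearMap.toContinuousLinearMap ((LinearMap.proj x).comp ρ)

@[simp] lemma rhoAt_apply (ρ : g →ₗ[ℝ] E → E) (x : E) (ξ : g) : rhoAt ρ x ξ = ρ ξ x := rfl

noncomputable def brC (br : g →ₗ[ℝ] g →ₗ[ℝ] g) : g →L[ℝ] g →L[ℝ] g :=
  LinearMap.toContinuousLinearMap
    { toFun := fun ξ => LinearMap.toContinuousLinearMap (br ξ)
      map_add' := by intro a b; ext v; simp
      map_smul' := by intro c a; ext v; simp }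

@[simp] lemma brC_apply (br : g →ₗ[ℝ] g →ₗ[ℝ] g) (ξ η : g) : brC br ξ η = br ξ η := rfl

lemma rho_apply_eq (ρ : g →ₗ[ℝ] E → E) {ι : Type*} [Fintype ι] (b : Module.Basis ι ℝ g)
    (ξ : g) (x : E) : ρ ξ x = ∑ i, b.repr ξ i • ρ (b i) x := by
  conv_lhs => rw [← b.sum_repr ξ]
  rw [map_sum]
  simp [Finset.sum_apply]

lemma hasFDerivAt_rho (ρ : g →ₗ[ℝ] E → E) (hsm : ∀ ξ : g, ContDiff ℝ (⊤ : ℕ∞) (ρ ξ))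
    {ι : Type*} [Fintype ι] (b : Module.Basis ι ℝ g) (ξ : g) (x : E) :
    HasFDerivAt (ρ ξ) (∑ i, b.repr ξ i • fderiv ℝ (ρ (b i)) x) x := by
  have : (ρ ξ) = fun y => ∑ i, b.repr ξ i • ρ (b i) y := by
    funext y; exact rho_apply_eq ρ b ξ y
  rw [this]
  exact HasFDerivAt.fun_sum fun i _ =>
    (((hsm (b i)).differentiable (by simp) x).hasFDerivAt).const_smul _

lemma hasFDerivAt_anchor (ρ : g →ₗ[ℝ] E → E) (hsm : ∀ ξ : g, ContDiff ℝ (⊤ : ℕ∞) (ρ ξ))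
    (X : E → g) (hX : ContDiff ℝ (⊤ : ℕ∞) X) (x : E) :
    HasFDerivAt (anchorMap ρ X)
      ((rhoAt ρ x).comp (fderiv ℝ X x) + fderiv ℝ (ρ (X x)) x) x := by
  let b := Module.finBasis ℝ g
  have hXd : HasFDerivAt X (fderiv ℝ X x) x := (hX.differentiable (by simp) x).hasFDerivAt
  have heq : anchorMap ρ X
      = fun y => ∑ i, (b.coord i).toContinuousLinearMap (X y) • ρ (b i) y := by
    funext y; exact rho_apply_eq ρ b (X y) y
  have h : HasFDerivAt (anchorMap ρ X)
      (∑ i, ((b.coord i).toContinuousLinearMap (X x) • fderiv ℝ (ρ (b i)) x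
        + ((b.coord i).toContinuousLinearMap.comp (fderiv ℝ X x)).smulRight (ρ (b i) x))) x := by
    rw [heq]
    exact HasFDerivAt.fun_sum fun i _ =>
      (((b.coord i).toContinuousLinearMap.hasFDerivAt.comp x hXd)).smul
        (((hsm (b i)).differentiable (by simp) x).hasFDerivAt)
  convert h using 1
  ext v
  rw [(hasFDerivAt_rho ρ hsm b (X x) x).fderiv]
  simp [Finset.sum_add_distrib, rho_apply_eq ρ b (fderiv ℝ X x v) x, add_comm]

lemma hasFDerivAt_actionBracket (br : g →ₗ[ℝ] g →ₗ[ℝ] g) (ρ : g →ₗ[ℝ] E → E)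
    (hsm : ∀ ξ : g, ContDiff ℝ (⊤ : ℕ∞) (ρ ξ))
    (Y Z : E → g) (hY : ContDiff ℝ (⊤ : ℕ∞) Y) (hZ : ContDiff ℝ (⊤ : ℕ∞) Z) (x : E) :
    HasFDerivAt (actionBracket br ρ Y Z)
      (((fderiv ℝ Z x).comp ((rhoAt ρ x).comp (fderiv ℝ Y x) + fderiv ℝ (ρ (Y x)) x)
          + (fderiv ℝ (fderiv ℝ Z) x).flip (anchorMap ρ Y x))
        - ((fderiv ℝ Y x).comp ((rhoAt ρ x).comp (fderiv ℝ Z x) + fderiv ℝ (ρ (Z x)) x)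
          + (fderiv ℝ (fderiv ℝ Y) x).flip (anchorMap ρ Z x))
        + ((brC br (Y x)).comp (fderiv ℝ Z x) + ((brC br).comp (fderiv ℝ Y x)).flip (Z x))) x := by
  have hYd : HasFDerivAt Y (fderiv ℝ Y x) x := (hY.differentiable (by simp) x).hasFDerivAt
  have hZd : HasFDerivAt Z (fderiv ℝ Z x) x := (hZ.differentiable (by simp) x).hasFDerivAt
  have hdY : HasFDerivAt (fderiv ℝ Y) (fderiv ℝ (fderiv ℝ Y) x) x :=
    (((hY.fderiv_right (m := 1) (by exact WithTop.coe_le_coe.2 le_top)).differentiable (by simp)) x).hasFDerivAt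
  have hdZ : HasFDerivAt (fderiv ℝ Z) (fderiv ℝ (fderiv ℝ Z) x) x :=
    (((hZ.fderiv_right (m := 1) (by exact WithTop.coe_le_coe.2 le_top)).differentiable (by simp)) x).hasFDerivAt
  have h1 : HasFDerivAt (fun y => fderiv ℝ Z y (anchorMap ρ Y y))
      ((fderiv ℝ Z x).comp ((rhoAt ρ x).comp (fderiv ℝ Y x) + fderiv ℝ (ρ (Y x)) x)
        + (fderiv ℝ (fderiv ℝ Z) x).flip (anchorMap ρ Y x)) x :=
    hdZ.clm_apply (hasFDerivAt_anchor ρ hsm Y hY x)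
  have h2 : HasFDerivAt (fun y => fderiv ℝ Y y (anchorMap ρ Z y))
      ((fderiv ℝ Y x).comp ((rhoAt ρ x).comp (fderiv ℝ Z x) + fderiv ℝ (ρ (Z x)) x)
        + (fderiv ℝ (fderiv ℝ Y) x).flip (anchorMap ρ Z x)) x :=
    hdY.clm_apply (hasFDerivAt_anchor ρ hsm Z hZ x)
  have h3 : HasFDerivAt (fun y => brC br (Y y) (Z y))
      ((brC br (Y x)).comp (fderiv ℝ Z x) + ((brC br).comp (fderiv ℝ Y x)).flip (Z x)) x :=
    ((brC br).hasFDerivAt.comp x hYd).clm_apply hZd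
  exact ((h1.sub h2).add h3 :)

end helpers

/-- For a finite-dimensional real Lie algebra `𝔤` (with bracket `br`) acting on a
finite-dimensional real normed space `E` via `ρ`, the action-algebroid bracket satisfies the
Jacobi identity: `[X,[Y,Z]] + [Y,[Z,X]] + [Z,[X,Y]] = 0` for smooth `X, Y, Z : E → 𝔤`. -/
theorem actionBracket_jacobi {E g : Type*}
    [NormedAddCommGroup E] [NormedSpace ℝ E] [FiniteDimensional ℝ E]
    [NormedAddCommGroup g] [NormedSpace ℝ g] [FiniteDimensional ℝ g]
    (br : g →ₗ[ℝ] g →ₗ[ℝ] g)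
    (hanti : ∀ ξ : g, br ξ ξ = 0)
    (hjac : ∀ ξ η ζ : g, br ξ (br η ζ) + br η (br ζ ξ) + br ζ (br ξ η) = 0)
    (ρ : g →ₗ[ℝ] E → E)
    (hsmooth : ∀ ξ : g, ContDiff ℝ (⊤ : ℕ∞) (ρ ξ))
    (hhom : ∀ ξ η : g,
      ρ (br ξ η) = fun x => fderiv ℝ (ρ η) x (ρ ξ x) - fderiv ℝ (ρ ξ) x (ρ η x))
    (X Y Z : E → g) (hX : ContDiff ℝ (⊤ : ℕ∞) X) (hY : ContDiff ℝ (⊤ : ℕ∞) Y) (hZ : ContDiff ℝ (⊤ : ℕ∞) Z) :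
    (fun x => actionBracket br ρ X (actionBracket br ρ Y Z) x
        + actionBracket br ρ Y (actionBracket br ρ Z X) x
        + actionBracket br ρ Z (actionBracket br ρ X Y) x)
      = (0 : E → g) := by
  funext x
  have ha : ∀ a c : g, br a c = - br c a := by
    intro a c
    have h := hanti (a + c)
    simp only [map_add, LinearMap.add_apply, hanti a, hanti c, zero_add, add_zero] at h
    exact eq_neg_of_add_eq_zero_left (by rw [add_comm] at h; exact h)
  have hsX : ∀ v w : E, fderiv ℝ (fderiv ℝ X) x v w = fderiv ℝ (fderiv ℝ X) x w v :=
    (hX.contDiffAt.isSymmSndFDerivAt (by rw [minSmoothness_of_isRCLikeNormedField]; exact WithTop.coe_le_coe.2 le_top))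
  have hsY : ∀ v w : E, fderiv ℝ (fderiv ℝ Y) x v w = fderiv ℝ (fderiv ℝ Y) x w v :=
    (hY.contDiffAt.isSymmSndFDerivAt (by rw [minSmoothness_of_isRCLikeNormedField]; exact WithTop.coe_le_coe.2 le_top))
  have hsZ : ∀ v w : E, fderiv ℝ (fderiv ℝ Z) x v w = fderiv ℝ (fderiv ℝ Z) x w v :=
    (hZ.contDiffAt.isSymmSndFDerivAt (by rw [minSmoothness_of_isRCLikeNormedField]; exact WithTop.coe_le_coe.2 le_top))
  have key := fun (W V : E → g) (hW : ContDiff ℝ (⊤ : ℕ∞) W) (hV : ContDiff ℝ (⊤ : ℕ∞) V) =>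
    (hasFDerivAt_actionBracket br ρ hsmooth W V hW hV x).fderiv
  have hBr : ∀ W V : E → g, actionBracket br ρ W V x
      = fderiv ℝ V x (ρ (W x) x) - fderiv ℝ W x (ρ (V x) x) + br (W x) (V x) :=
    fun _ _ => rfl
  simp only [hBr, anchorMap]
  rw [key Y Z hY hZ, key Z X hZ hX, key X Y hX hY]
  simp only [anchorMap, ContinuousLinearMap.add_apply, ContinuousLinearMap.sub_apply,
    ContinuousLinearMap.coe_comp', Function.comp_apply, ContinuousLinearMap.flip_apply,
    brC_apply, rhoAt_apply, map_add, map_sub, Pi.add_apply, Pi.sub_apply, hhom,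
    Pi.zero_apply]
  rw [hsZ (ρ (X x) x) (ρ (Y x) x), hsY (ρ (X x) x) (ρ (Z x) x), hsX (ρ (Y x) x) (ρ (Z x) x),
    ha ((fderiv ℝ Y x) (ρ (X x) x)) (Z x), ha ((fderiv ℝ Z x) (ρ (Y x) x)) (X x),
    ha ((fderiv ℝ X x) (ρ (Z x) x)) (Y x), ← hjac (X x) (Y x) (Z x)]
  abel
end

section
/- Let k be a field, R a commutative k-algebra, and L a Lie algebra over k which is also an R-module whose scalar action is compatible with the k-structure, and which is faithful as an R-module (r • x = 0 for all x ∈ L implies r = 0). Suppose ρ : L → Der_k(R) is a k-linear map into the k-derivations of R satisfying the Leibniz identity ⁅x, a • y⁆ = a • ⁅x, y⁆ + (ρ(x)(a)) • y for all x, y ∈ L and a ∈ R. Then ρ is a Lie algebra homomorphism: ρ(⁅x, y⁆) = ρ(x) ∘ ρ(y) − ρ(y) ∘ ρ(x) (the commutator bracket of derivations) for all x, y ∈ L. (The anchor of a Lie algebroid, or of a Lie–Rinehart algebra, is automatically a morphism.) -/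
/-! Expand the Jacobi identity `⁅⁅x, y⁆, a • z⁆ = ⁅x, ⁅y, a • z⁆⁆ - ⁅y, ⁅x, a • z⁆⁆` with the
Leibniz rule: the terms carrying `a •` cancel by Jacobi itself, and what remains is
`(ρ ⁅x, y⁆ a - (ρ x (ρ y a) - ρ y (ρ x a))) • z = 0` for every `z`, so faithfulness finishes. -/

section LeibnizAnchor

variable {R L : Type*} [CommRing R] [LieRing L] [Module R L]

theorem anchor_lie_sub_commutator_smul_eq_zero (ρ : L → R → R)
    (hleibniz : ∀ (x y : L) (a : R), ⁅x, a • y⁆ = a • ⁅x, y⁆ + ρ x a • y) (x y z : L) (a : R) :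
    (ρ ⁅x, y⁆ a - (ρ x (ρ y a) - ρ y (ρ x a))) • z = 0 := by
  have jacobi : ⁅⁅x, y⁆, a • z⁆ = ⁅x, ⁅y, a • z⁆⁆ - ⁅y, ⁅x, a • z⁆⁆ := lie_lie _ _ _
  simp only [hleibniz, lie_add, lie_lie] at jacobi
  linear_combination (norm := module) jacobi

theorem anchor_lie_apply_of_faithful (ρ : L → R → R)
    (hfaithful : ∀ r : R, (∀ x : L, r • x = 0) → r = 0)
    (hleibniz : ∀ (x y : L) (a : R), ⁅x, a • y⁆ = a • ⁅x, y⁆ + ρ x a • y) (x y : L) (a : R) :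
    ρ ⁅x, y⁆ a = ρ x (ρ y a) - ρ y (ρ x a) :=
  sub_eq_zero.mp <| hfaithful _ fun z ↦ anchor_lie_sub_commutator_smul_eq_zero ρ hleibniz x y z a

end LeibnizAnchor

theorem lieRinehart_anchor_is_morphism_general
    (k R L : Type*) [Field k] [CommRing R] [Algebra k R]
    [LieRing L] [LieAlgebra k L]
    [Module R L]
    (hfaithful : ∀ r : R, (∀ x : L, r • x = 0) → r = 0)
    (ρ : L →ₗ[k] Derivation k R R)
    (hleibniz : ∀ (x y : L) (a : R), ⁅x, a • y⁆ = a • ⁅x, y⁆ + (ρ x a) • y) :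
    ∀ x y : L, ρ ⁅x, y⁆ = ⁅ρ x, ρ y⁆ ∧ ∀ a : R, ρ ⁅x, y⁆ a = ρ x (ρ y a) - ρ y (ρ x a) := by
  have anchor_lie_apply := anchor_lie_apply_of_faithful (fun x a ↦ ρ x a) hfaithful hleibniz
  refine fun x y ↦ ⟨?_, anchor_lie_apply x y⟩
  ext a
  rw [Derivation.commutator_apply]
  exact anchor_lie_apply x y a

/-- The anchor of a Lie–Rinehart algebra is automatically a morphism.  Let `k` be a field,
`R` a commutative `k`-algebra, and `L` a Lie algebra over `k` which is also a faithful
`R`-module compatibly with the `k`-structure.  If `ρ : L → Der_k(R)` is `k`-linear and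
satisfies the Leibniz identity `⁅x, a • y⁆ = a • ⁅x, y⁆ + (ρ(x)(a)) • y`, then `ρ` is a Lie
algebra homomorphism into the derivations with the commutator bracket. -/
theorem lieRinehart_anchor_is_morphism
    (k R L : Type*) [Field k] [CommRing R] [Algebra k R]
    [LieRing L] [LieAlgebra k L]
    [Module R L] [IsScalarTower k R L]
    (hfaithful : ∀ r : R, (∀ x : L, r • x = 0) → r = 0)
    (ρ : L →ₗ[k] Derivation k R R)
    (hleibniz : ∀ (x y : L) (a : R), ⁅x, a • y⁆ = a • ⁅x, y⁆ + (ρ x a) • y) :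
    ∀ x y : L, ρ ⁅x, y⁆ = ⁅ρ x, ρ y⁆ ∧ ∀ a : R, ρ ⁅x, y⁆ a = ρ x (ρ y a) - ρ y (ρ x a) :=
  lieRinehart_anchor_is_morphism_general k R L hfaithful ρ hleibniz
end
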